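/- Let $M$ be a weight sequence with $p! \prec M$ (i.e., for every $H>0$ there is $C_H>0$ with $p! \leq C_H H^p M_p$ for all $p$). Then $\omega_M^\star(s) \leq \omega_{M^*}(1/s)$ for all $s > 0$, where $M^*_p = M_p/p!$ and $\omega_M^\star(s) = \sup_{t\geq 0}\{\omega_M(t) - ts\}$. -/

import Mathlib

/-!
Since `(ts)^p / p! ≤ e^{ts}`, every term of `ω_M(t)` splits as
`t^p / M_p = ((ts)^p / p!) · (1/s)^p / M*_p ≤ e^{ts} · (1/s)^p / M*_p`, so taking logarithms
`ω_M(t) - ts ≤ ω_{M*}(1/s)` for every `t ≥ 0`. Condition `(NA)` with `H = s` is what makes the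
supremum `ω_{M*}(1/s)` finite.
-/

open Real Nat

noncomputable def assocFun (N : ℕ → ℝ) (t : ℝ) : ℝ := ⨆ p : ℕ, log (t ^ p / N p)

theorem zero_le_assocFun {N : ℕ → ℝ} (h0 : N 0 = 1) {t : ℝ}
    (hbdd : BddAbove (Set.range fun p : ℕ => log (t ^ p / N p))) : 0 ≤ assocFun N t := by
  unfold assocFun
  simpa [h0] using le_ciSup hbdd 0

theorem pow_div_le_exp_mul_pow_div_div_factorial {t s a : ℝ} (ht : 0 ≤ t) (hs : 0 < s)
    (ha : 0 < a) (p : ℕ) : t ^ p / a ≤ exp (t * s) * ((1 / s) ^ p / (a / p !)) := by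
  have hsplit : t ^ p / a = (t * s) ^ p / p ! * ((1 / s) ^ p / (a / p !)) := by
    rw [one_div, inv_pow]
    field_simp
    ring
  rw [hsplit]
  gcongr
  exact pow_div_factorial_le_exp _ (by positivity) p

theorem bddAbove_log_pow_div_div_factorial {M : ℕ → ℝ} (hpos : ∀ p, 0 < M p) {s C : ℝ}
    (hs : 0 < s) (hC : ∀ p : ℕ, (p ! : ℝ) ≤ C * s ^ p * M p) :
    BddAbove (Set.range fun p : ℕ => log ((1 / s) ^ p / (M p / p !))) := by
  refine ⟨log C, ?_⟩
  rintro _ ⟨p, rfl⟩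
  have hterm : (1 / s) ^ p / (M p / p !) = p ! / (s ^ p * M p) := by
    rw [one_div, inv_pow]
    field_simp
  have hMp := hpos p
  refine log_le_log (by positivity) ?_
  rw [hterm, div_le_iff₀ (by positivity), ← mul_assoc]
  exact hC p

theorem assocFun_sub_mul_le_assocFun_div_factorial {M : ℕ → ℝ} (hpos : ∀ p, 0 < M p)
    (h0 : M 0 = 1) {s t : ℝ} (hs : 0 < s) (ht : 0 ≤ t)
    (hbdd : BddAbove (Set.range fun p : ℕ => log ((1 / s) ^ p / (M p / p !)))) :
    assocFun M t - t * s ≤ assocFun (fun p => M p / p !) (1 / s) := by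
  have hnonneg : 0 ≤ assocFun (fun p => M p / p !) (1 / s) :=
    zero_le_assocFun (by simp [h0]) hbdd
  rw [sub_le_iff_le_add]
  refine Real.iSup_le (fun p => ?_) (by positivity)
  have hMp := hpos p
  have hterm : log ((1 / s) ^ p / (M p / p !)) ≤ assocFun (fun p => M p / p !) (1 / s) :=
    le_ciSup hbdd p
  rcases ht.eq_or_lt with rfl | htpos
  · -- `log 0 = 0`, so at `t = 0` every term of `ω_M` vanishes.
    have hzero : log ((0 : ℝ) ^ p / M p) = 0 := by
      rcases p with _ | p <;> simp [h0]
    linarith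
  · calc log (t ^ p / M p)
        ≤ log (exp (t * s) * ((1 / s) ^ p / (M p / p !))) :=
          log_le_log (by positivity) (pow_div_le_exp_mul_pow_div_div_factorial ht hs hMp p)
      _ = t * s + log ((1 / s) ^ p / (M p / p !)) := by
          rw [log_mul (exp_ne_zero _) (by positivity), log_exp]
      _ ≤ _ := by linarith

theorem stmt_7_general (M : ℕ → ℝ) (hpos : ∀ p, 0 < M p) (h0 : M 0 = 1)
    (hNA : ∀ H : ℝ, 0 < H → ∃ C : ℝ, 0 < C ∧ ∀ p : ℕ, (p.factorial : ℝ) ≤ C * H ^ p * M p) :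
    ∀ s : ℝ, 0 < s →
      sSup {y : ℝ | ∃ t : ℝ, 0 ≤ t ∧ y = (⨆ p : ℕ, Real.log (t ^ p / M p)) - t * s} ≤
        ⨆ p : ℕ, Real.log ((1 / s) ^ p / (M p / p.factorial)) := by
  intro s hs
  obtain ⟨C, -, hC⟩ := hNA s hs
  refine csSup_le ⟨_, 0, le_rfl, rfl⟩ ?_
  rintro _ ⟨t, ht, rfl⟩
  exact assocFun_sub_mul_le_assocFun_div_factorial hpos h0 hs ht
    (bddAbove_log_pow_div_div_factorial hpos hs hC)

/-- For a weight sequence `M` with `p! ≺ M`, the Legendre transform of the associated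
function satisfies `ω_M⋆(s) ≤ ω_{M*}(1/s)` for all `s > 0`, where `M*_p = M_p/p!`. -/
theorem stmt_7 (M : ℕ → ℝ) (hpos : ∀ p, 0 < M p) (h0 : M 0 = 1)
    (hinc : ∀ p : ℕ, 1 ≤ p → M p / M (p - 1) ≤ M (p + 1) / M p)
    (hlim : Filter.Tendsto (fun p => M (p + 1) / M p) Filter.atTop Filter.atTop)
    (hNA : ∀ H : ℝ, 0 < H → ∃ C : ℝ, 0 < C ∧ ∀ p : ℕ, (p.factorial : ℝ) ≤ C * H ^ p * M p) :
    ∀ s : ℝ, 0 < s →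
      sSup {y : ℝ | ∃ t : ℝ, 0 ≤ t ∧ y = (⨆ p : ℕ, Real.log (t ^ p / M p)) - t * s} ≤
        ⨆ p : ℕ, Real.log ((1 / s) ^ p / (M p / p.factorial)) :=
  stmt_7_general M hpos h0 hNA
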